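/- arXiv:2506.08841 — 3 statements merged into one kernel-verified Lean document; each statement's English description precedes it below -/
import Mathlib

section
/- The number of irreducible natural unit interval orders on [n], for n ≥ 2, equals the number of non-decreasing functions f : [n−2] → [n−1] with f(i) ≥ i for every i. (Such posets are in bijection with these functions.) -/
namespace NUIO

def fbar (n : ℕ) (f : Fin (n-2) → Fin (n-1)) (i : Fin n) : ℕ :=
  if h : (i : ℕ) < n - 2 then ((f ⟨(i : ℕ), h⟩ : Fin (n-1)) : ℕ) else n

def Phi (n : ℕ) (f : Fin (n-2) → Fin (n-1)) : Finset (Fin n × Fin n) :=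
  Finset.univ.filter (fun p => fbar n f p.1 + 2 ≤ (p.2 : ℕ))

lemma mem_Phi {n : ℕ} (f : Fin (n-2) → Fin (n-1)) (p : Fin n × Fin n) :
    p ∈ Phi n f ↔ fbar n f p.1 + 2 ≤ (p.2 : ℕ) := by
  simp [Phi]

def S (n : ℕ) (E : Finset (Fin n × Fin n)) (i : Fin n) : Finset (Fin n) :=
  Finset.univ.filter (fun k => (i, k) ∈ E)

lemma mem_S {n : ℕ} (E : Finset (Fin n × Fin n)) (i k : Fin n) :
    k ∈ S n E i ↔ (i, k) ∈ E := by simp [S]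

def Psi (n : ℕ) (hn : 2 ≤ n) (E : Finset (Fin n × Fin n)) (i : Fin (n-2)) : Fin (n-1) :=
  if h : (S n E ⟨(i : ℕ), by have := i.2; omega⟩).Nonempty
  then ⟨(((S n E ⟨(i : ℕ), by have := i.2; omega⟩).min' h : Fin n) : ℕ) - 2,
        by
          have h2 := (((S n E ⟨(i : ℕ), by have := i.2; omega⟩).min' h : Fin n)).2
          omega⟩
  else ⟨n - 2, by omega⟩

lemma fbar_ge {n : ℕ} (f : Fin (n-2) → Fin (n-1))
    (hf : ∀ i : Fin (n-2), (i : ℕ) ≤ (f i : ℕ)) (i : Fin n) :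
    (i : ℕ) ≤ fbar n f i := by
  unfold fbar
  split
  · rename_i h
    exact hf ⟨(i : ℕ), h⟩
  · exact le_of_lt i.2

lemma fbar_mono {n : ℕ} (f : Fin (n-2) → Fin (n-1)) (hf : Monotone f)
    {i j : Fin n} (hij : i ≤ j) : fbar n f i ≤ fbar n f j := by
  have hij' : (i : ℕ) ≤ (j : ℕ) := hij
  unfold fbar
  by_cases hi : (i : ℕ) < n - 2 <;> by_cases hj : (j : ℕ) < n - 2 <;>
    simp only [hi, hj, dif_pos, dif_neg, not_false_iff]
  · exact hf (show (⟨(i:ℕ), hi⟩ : Fin (n-2)) ≤ ⟨(j:ℕ), hj⟩ from hij')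
  · have := (f ⟨(i:ℕ), hi⟩).2; omega
  · omega
  · exact le_refl _

/-- The key fact: in a good `E`, any edge `(i,k)` has `k ≥ i+2`. -/
lemma edge_ge {n : ℕ} {E : Finset (Fin n × Fin n)}
    (h1 : ∀ p ∈ E, p.1 < p.2)
    (h5 : ∀ i j : Fin n, (j : ℕ) = (i : ℕ) + 1 → (i, j) ∉ E)
    {i k : Fin n} (hik : (i, k) ∈ E) : (i : ℕ) + 2 ≤ (k : ℕ) := by
  have hlt : (i : ℕ) < (k : ℕ) := h1 _ hik
  have hne : (k : ℕ) ≠ (i : ℕ) + 1 := fun h => h5 i k h hik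
  omega

theorem main (n : ℕ) (hn : 2 ≤ n) :
    Nat.card {E : Finset (Fin n × Fin n) //
        (∀ p ∈ E, p.1 < p.2) ∧
        (∀ i : Fin n, (i, i) ∉ E) ∧
        (∀ a b c : Fin n, (a, b) ∈ E → (b, c) ∈ E → (a, c) ∈ E) ∧
        (∀ i j k l : Fin n, i ≤ j → j ≤ k → k ≤ l → (j, k) ∈ E → (i, l) ∈ E) ∧
        (∀ i j : Fin n, (j : ℕ) = (i : ℕ) + 1 → (i, j) ∉ E)} =
    Nat.card {f : Fin (n - 2) → Fin (n - 1) //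
        Monotone f ∧ ∀ i : Fin (n - 2), (i : ℕ) ≤ (f i : ℕ)} := by
  refine Nat.card_congr ?_
  refine
    { toFun := fun E => ⟨Psi n hn E.1, ?_, ?_⟩
      invFun := fun f => ⟨Phi n f.1, ?_, ?_, ?_, ?_, ?_⟩
      left_inv := ?_
      right_inv := ?_ }
  -- Psi monotone
  · obtain ⟨E, h1, h2, h3, h4, h5⟩ := E
    intro i j hij
    have hij' : (i : ℕ) ≤ (j : ℕ) := hij
    simp only [Psi]
    split
    · rename_i hSi
      split
      · rename_i hSj
        -- both nonempty
        set a := (S n E ⟨(i:ℕ), by have := i.2; omega⟩).min' hSi with ha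
        set b := (S n E ⟨(j:ℕ), by have := j.2; omega⟩).min' hSj with hb
        have hbmem : ((⟨(j:ℕ), by have := j.2; omega⟩ : Fin n), b) ∈ E :=
          (mem_S _ _ _).1 (Finset.min'_mem _ _)
        have hbi : ((⟨(i:ℕ), by have := i.2; omega⟩ : Fin n), b) ∈ E := by
          refine h4 _ _ _ _ ?_ ?_ (le_refl b) hbmem
          · exact hij'
          · exact le_of_lt (h1 _ hbmem)
        have hle : (a : ℕ) ≤ (b : ℕ) :=
          Finset.min'_le _ _ ((mem_S _ _ _).2 hbi)
        simp only [Fin.mk_le_mk]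
        omega
      · -- S_j empty : Psi j = n-2 which is max
        rename_i hSj
        simp only [Fin.mk_le_mk]
        have h2' := ((S n E ⟨(i:ℕ), by have := i.2; omega⟩).min' hSi).2
        omega
    · rename_i hSi
      split
      · rename_i hSj
        -- S_i empty, S_j nonempty: impossible
        exfalso
        apply hSi
        obtain ⟨b, hb⟩ := hSj
        have hbmem := (mem_S _ _ _).1 hb
        have hbi : ((⟨(i:ℕ), by have := i.2; omega⟩ : Fin n), b) ∈ E := by
          refine h4 _ _ _ _ ?_ ?_ (le_refl b) hbmem
          · exact hij'
          · exact le_of_lt (h1 _ hbmem)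
        exact ⟨b, (mem_S _ _ _).2 hbi⟩
      · exact le_refl _
  -- Psi ≥ i
  · obtain ⟨E, h1, h2, h3, h4, h5⟩ := E
    intro i
    simp only [Psi]
    split
    · rename_i hSi
      set a := (S n E ⟨(i:ℕ), by have := i.2; omega⟩).min' hSi with ha
      have hamem : ((⟨(i:ℕ), by have := i.2; omega⟩ : Fin n), a) ∈ E :=
        (mem_S _ _ _).1 (Finset.min'_mem _ _)
      have := edge_ge h1 h5 hamem
      simp only at this ⊢
      omega
    · have := i.2
      simp only
      omega
  -- Phi conditions
  · obtain ⟨hmono, hge⟩ := f.2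
    intro p hp
    rw [mem_Phi] at hp
    have := fbar_ge f.1 hge p.1
    exact (Fin.lt_def.2 (by omega))
  · obtain ⟨hmono, hge⟩ := f.2
    intro i hi
    rw [mem_Phi] at hi
    have := fbar_ge f.1 hge i
    simp only at hi
    omega
  · obtain ⟨hmono, hge⟩ := f.2
    intro a b c hab hbc
    rw [mem_Phi] at hab hbc ⊢
    have h1 : fbar n f.1 b + 2 ≤ (c : ℕ) := hbc
    have h2 : (b : ℕ) ≤ fbar n f.1 b := fbar_ge f.1 hge b
    have h3 : fbar n f.1 a + 2 ≤ (b : ℕ) := hab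
    simp only at *
    omega
  · obtain ⟨hmono, hge⟩ := f.2
    intro i j k l hij hjk hkl h
    rw [mem_Phi] at h ⊢
    have h1 : fbar n f.1 i ≤ fbar n f.1 j := fbar_mono f.1 hmono hij
    have h2 : (k : ℕ) ≤ (l : ℕ) := hkl
    simp only at *
    omega
  · obtain ⟨hmono, hge⟩ := f.2
    intro i j hji h
    rw [mem_Phi] at h
    have := fbar_ge f.1 hge i
    simp only at h
    omega
  -- left_inv : Phi (Psi E) = E
  · rintro ⟨E, h1, h2, h3, h4, h5⟩
    ext1
    simp only
    ext ⟨i, k⟩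
    rw [mem_Phi]
    simp only
    constructor
    · intro h
      unfold fbar at h
      split at h
      · rename_i hi
        simp only [Psi] at h
        split at h
        · rename_i hS
          set a := (S n E ⟨(i:ℕ), _⟩).min' hS with ha
          have hamem : ((⟨(i:ℕ), by have := i.2; omega⟩ : Fin n), a) ∈ E :=
            (mem_S E _ a).1 (Finset.min'_mem _ hS)
          have hge2 := edge_ge h1 h5 hamem
          simp only at h hge2
          -- h : a - 2 + 2 ≤ k, so a ≤ k
          have hak : (a : ℕ) ≤ (k : ℕ) := by omega
          have hmm : ((⟨(i:ℕ), by have := i.2; omega⟩ : Fin n), k) ∈ E := by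
            refine h4 _ _ _ _ (le_refl _) ?_ ?_ hamem
            · simp only [Fin.le_def]; omega
            · exact hak
          exact hmm
        · -- empty case : n - 2 + 2 ≤ k < n, impossible
          simp only at h
          have := k.2
          omega
      · -- fbar = n : n + 2 ≤ k impossible
        have := k.2
        omega
    · intro hmem
      have hge2 := edge_ge h1 h5 hmem
      have hkn := k.2
      have hi : (i : ℕ) < n - 2 := by omega
      unfold fbar
      rw [dif_pos hi]
      simp only [Psi]
      have hS : (S n E ⟨(i:ℕ), by omega⟩).Nonempty :=
        ⟨k, (mem_S _ _ _).2 hmem⟩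
      rw [dif_pos]
      · have hle : ((S n E ⟨(i:ℕ), by omega⟩).min' hS : ℕ) ≤ (k : ℕ) := by
          exact Finset.min'_le _ k ((mem_S E _ k).2 hmem)
        have hamem : ((⟨(i:ℕ), by omega⟩ : Fin n), (S n E ⟨(i:ℕ), by omega⟩).min' hS) ∈ E :=
          (mem_S E _ _).1 (Finset.min'_mem _ hS)
        have hge3 := edge_ge h1 h5 hamem
        simp only at hge3 ⊢
        omega
      · exact hS
  -- right_inv : Psi (Phi f) = f
  · rintro ⟨f, hmono, hge⟩
    ext1
    simp only
    funext i
    apply Fin.ext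
    simp only [Psi]
    have hi := i.2
    have hfi := (f i).2
    split
    · rename_i hS
      set a := (S n (Phi n f) ⟨(i:ℕ), _⟩).min' hS with ha
      have hamem : ((⟨(i:ℕ), by omega⟩ : Fin n), a) ∈ Phi n f :=
        (mem_S _ _ a).1 (Finset.min'_mem _ hS)
      rw [mem_Phi] at hamem
      have hfbar : fbar n f (⟨(i:ℕ), by omega⟩ : Fin n) = (f i : ℕ) := by
        unfold fbar
        rw [dif_pos (show ((⟨(i:ℕ), by omega⟩ : Fin n) : ℕ) < n - 2 from hi)]
      simp only at hamem
      rw [hfbar] at hamem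
      -- a ≥ f i + 2 ; also a ≤ f i + 2 by minimality (f i + 2 < n since a < n)
      have han := a.2
      have hfk : ((⟨(f i : ℕ) + 2, by omega⟩ : Fin n) ∈ S n (Phi n f) ⟨(i:ℕ), by omega⟩) := by
        rw [mem_S, mem_Phi]
        simp only [hfbar]
        exact le_refl _
      have hle : (a : ℕ) ≤ (f i : ℕ) + 2 := Finset.min'_le _ _ hfk
      simp only
      omega
    · rename_i hS
      -- S empty : f i must equal n - 2
      simp only
      by_contra hne
      apply hS
      have hflt : (f i : ℕ) < n - 2 := by omega
      refine ⟨⟨(f i : ℕ) + 2, by omega⟩, ?_⟩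
      rw [mem_S, mem_Phi]
      have hfbar : fbar n f (⟨(i:ℕ), by omega⟩ : Fin n) = (f i : ℕ) := by
        unfold fbar
        rw [dif_pos (show ((⟨(i:ℕ), by omega⟩ : Fin n) : ℕ) < n - 2 from hi)]
      simp only [hfbar]
      exact le_refl _

end NUIO

/-- the number of irreducible natural unit interval orders on `[n]`,
`n ≥ 2`, equals the number of non-decreasing functions `f : [n-2] → [n-1]` with
`f(i) ≥ i`. (Orders given by their edge sets `E`, with `(j,k) ∈ E` iff `j <_P k`.) -/
theorem card_irreducible_natural_unit_interval_orders (n : ℕ) (hn : 2 ≤ n) :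
    Nat.card {E : Finset (Fin n × Fin n) //
        (∀ p ∈ E, p.1 < p.2) ∧
        (∀ i : Fin n, (i, i) ∉ E) ∧
        (∀ a b c : Fin n, (a, b) ∈ E → (b, c) ∈ E → (a, c) ∈ E) ∧
        (∀ i j k l : Fin n, i ≤ j → j ≤ k → k ≤ l → (j, k) ∈ E → (i, l) ∈ E) ∧
        (∀ i j : Fin n, (j : ℕ) = (i : ℕ) + 1 → (i, j) ∉ E)} =
      Nat.card {f : Fin (n - 2) → Fin (n - 1) //
        Monotone f ∧ ∀ i : Fin (n - 2), (i : ℕ) ≤ (f i : ℕ)} := by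
  exact NUIO.main n hn
end

section
/- For a finite poset P on n elements and a composition α = (α₁,…,α_k) of n, the number of listings σ of P such that {i ∈ [n−1] : σ_i ≰_P σ_{i+1}} ⊆ {α₁, α₁+α₂, …, α₁+⋯+α_{k−1}} equals the number of ordered set partitions (P₁,…,P_k) of P where each P_i is a chain with α_i elements. -/
/-!
Cut the positions `0, …, n - 1` into consecutive blocks of sizes `α₁, …, α_k`. A listing has all
its non-ascents at block boundaries iff it is monotone on every block, and a listing that is
monotone on every block is determined by the images of the blocks, which form an ordered chain
partition: a chain in a poset has exactly one increasing enumeration.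
-/

/-- The list of prefix sums `α₁, α₁+α₂, …` of a list of naturals
(including the total sum). -/
def prefixSums (L : List ℕ) : List ℕ :=
  (List.range L.length).map (fun j => (L.take (j + 1)).sum)

theorem Fin.monotone_iff_le_of_val_eq_succ {α : Type*} [Preorder α] {k : ℕ} {f : Fin k → α} :
    Monotone f ↔ ∀ t t' : Fin k, (t' : ℕ) = t + 1 → f t ≤ f t' := by
  cases k with
  | zero => exact ⟨fun _ t => t.elim0, fun _ t => t.elim0⟩
  | succ k =>
    rw [Fin.monotone_iff_le_succ]
    refine ⟨fun h t t' htt' => ?_, fun h t => h _ _ rfl⟩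
    obtain ⟨s, rfl⟩ : ∃ s : Fin k, t = s.castSucc := ⟨⟨t, by omega⟩, rfl⟩
    obtain rfl : t' = s.succ := Fin.ext htt'
    exact h s

theorem Fin.sum_univ_getElem_eq_sum_take {M : Type*} [AddCommMonoid M] (L : List M) {j : ℕ}
    (h : j ≤ L.length) :
    ∑ i : Fin j, L[(i : ℕ)]'(i.2.trans_le h) = (L.take j).sum := by
  induction j with
  | zero => simp
  | succ j ih =>
    rw [Fin.sum_univ_castSucc, List.sum_take_succ _ _ (by omega), ← ih (by omega)]
    rfl

theorem IsChain.exists_equiv_fin_strictMono {α : Type*} [PartialOrder α] {s : Finset α} {k : ℕ}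
    (hs : IsChain (· ≤ ·) (s : Set α)) (hk : s.card = k) :
    ∃ e : Fin k ≃ (s : Set α), StrictMono fun t => (e t : α) := by
  classical
  let := hs.linearOrder
  let e := monoEquivOfFin (s : Set α) (by simpa using hk)
  exact ⟨e.toEquiv, (Subtype.strictMono_coe _).comp e.strictMono⟩

section Blocks

variable {ι α : Type*} {m : ι → ℕ}

def IsOrderedChainPartition [LE α] (m : ι → ℕ) (f : ι → Finset α) : Prop :=
  (∀ j, (f j).card = m j) ∧
  (∀ j, ∀ a ∈ f j, ∀ b ∈ f j, a ≤ b ∨ b ≤ a) ∧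
  (∀ j₁ j₂, j₁ ≠ j₂ → Disjoint (f j₁) (f j₂)) ∧
  (∀ a : α, ∃ j, a ∈ f j)

def IsBlockMonotone [Preorder α] (τ : (Σ j, Fin (m j)) → α) : Prop :=
  ∀ j, Monotone fun t => τ ⟨j, t⟩

def blockImage (τ : (Σ j, Fin (m j)) ≃ α) (j : ι) : Finset α :=
  Finset.univ.map ((Function.Embedding.sigmaMk j).trans τ.toEmbedding)

theorem coe_blockImage (τ : (Σ j, Fin (m j)) ≃ α) (j : ι) :
    (blockImage τ j : Set α) = Set.range fun t => τ ⟨j, t⟩ := by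
  simp [blockImage, Set.image_univ]

theorem isOrderedChainPartition_blockImage [PartialOrder α] {τ : (Σ j, Fin (m j)) ≃ α}
    (hτ : IsBlockMonotone τ) : IsOrderedChainPartition m (blockImage τ) := by
  simp only [IsOrderedChainPartition, blockImage, Finset.mem_map, Finset.mem_univ, true_and,
    Function.Embedding.trans_apply, Function.Embedding.sigmaMk_apply, Equiv.coe_toEmbedding,
    Finset.card_map, Finset.card_univ, Fintype.card_fin, implies_true, forall_exists_index,
    forall_apply_eq_imp_iff, Finset.disjoint_left]
  refine ⟨fun j t t' => (le_total t t').imp (fun h => hτ j h) (fun h => hτ j h), ?_, ?_⟩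
  · rintro j₁ j₂ hne t ⟨t', h⟩
    exact hne (congrArg Sigma.fst (τ.injective h)).symm
  · intro a
    exact ⟨(τ.symm a).1, (τ.symm a).2, by simp⟩

theorem blockImage_injOn [PartialOrder α] :
    Set.InjOn (blockImage (m := m) (α := α)) {τ | IsBlockMonotone τ} := by
  intro τ₁ h₁ τ₂ h₂ heq
  ext ⟨j, t⟩
  have hinj : ∀ τ : (Σ j, Fin (m j)) ≃ α, Function.Injective fun t => τ ⟨j, t⟩ :=
    fun τ => τ.injective.comp sigma_mk_injective
  have hrange : (Set.range fun t => τ₁ ⟨j, t⟩) = Set.range fun t => τ₂ ⟨j, t⟩ := by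
    rw [← coe_blockImage, ← coe_blockImage, heq]
  rw [StrictMono.range_inj ((h₁ j).strictMono_of_injective (hinj τ₁))
    ((h₂ j).strictMono_of_injective (hinj τ₂))] at hrange
  exact congrFun hrange t

theorem exists_blockImage_eq [PartialOrder α] {f : ι → Finset α}
    (hf : IsOrderedChainPartition m f) :
    ∃ τ : (Σ j, Fin (m j)) ≃ α, IsBlockMonotone τ ∧ blockImage τ = f := by
  obtain ⟨hcard, hchain, hdisj, hcover⟩ := hf
  choose e he using fun j =>
    IsChain.exists_equiv_fin_strictMono (fun a ha b hb _ => hchain j a ha b hb) (hcard j)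
  have hpart : ∀ a : α, ∃! j, a ∈ (f j : Set α) := by
    intro a
    obtain ⟨j, hj⟩ := hcover a
    refine ⟨j, hj, fun j' hj' => ?_⟩
    by_contra hne
    exact Finset.disjoint_left.1 (hdisj j' j hne) hj' hj
  refine ⟨(Equiv.sigmaCongrRight e).trans (Set.sigmaEquiv _ hpart), fun j => (he j).monotone, ?_⟩
  funext j
  rw [← Finset.coe_inj, coe_blockImage]
  change Set.range (Subtype.val ∘ e j) = _
  rw [(e j).surjective.range_comp, Subtype.range_coe]

theorem card_isBlockMonotone_eq_card_isOrderedChainPartition [PartialOrder α] :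
    Nat.card {τ : (Σ j, Fin (m j)) ≃ α // IsBlockMonotone τ} =
      Nat.card {f : ι → Finset α // IsOrderedChainPartition m f} :=
  Nat.card_eq_of_bijective (fun τ => ⟨blockImage τ.1, isOrderedChainPartition_blockImage τ.2⟩)
    ⟨fun τ₁ τ₂ h => Subtype.ext (blockImage_injOn τ₁.2 τ₂.2 (congrArg Subtype.val h)),
      fun f =>
        let ⟨τ, hτ, himage⟩ := exists_blockImage_eq f.2
        ⟨⟨τ, hτ⟩, Subtype.ext himage⟩⟩

end Blocks

def blockEquiv (L : List ℕ) : (Σ j : Fin L.length, Fin (L.get j)) ≃ Fin L.sum :=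
  finSigmaFinEquiv.trans (finCongr (by simp))

theorem blockEquiv_val (L : List ℕ) (j : Fin L.length) (t : Fin (L.get j)) :
    (blockEquiv L ⟨j, t⟩ : ℕ) = (L.take j).sum + t := by
  simp [blockEquiv, Fin.sum_univ_getElem_eq_sum_take]

theorem mem_prefixSums {L : List ℕ} {s : ℕ} :
    s ∈ prefixSums L ↔ ∃ j < L.length, (L.take (j + 1)).sum = s := by
  simp [prefixSums]

theorem blockEquiv_add_one_mem_prefixSums_iff (L : List ℕ) (j : Fin L.length)
    (t : Fin (L.get j)) :
    (blockEquiv L ⟨j, t⟩ : ℕ) + 1 ∈ prefixSums L ↔ (t : ℕ) + 1 = L.get j := by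
  have hsucc : (L.take (j + 1)).sum = (L.take j).sum + L.get j := List.sum_take_succ _ _ j.2
  have ht := t.2
  rw [blockEquiv_val, mem_prefixSums]
  constructor
  · rintro ⟨j', -, hs⟩
    rcases lt_or_ge j' j with h | h
    · have : (L.take (j' + 1)).sum ≤ (L.take j).sum := List.monotone_sum_take L (by omega)
      omega
    · have : (L.take (j + 1)).sum ≤ (L.take (j' + 1)).sum := List.monotone_sum_take L (by omega)
      omega
  · intro ht
    exact ⟨j, j.2, by omega⟩

theorem nonAscents_mem_prefixSums_iff_isBlockMonotone {α : Type*} [Preorder α] (L : List ℕ)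
    (σ : Fin L.sum ≃ α) :
    (∀ i j : Fin L.sum, (j : ℕ) = i + 1 → ¬ σ i ≤ σ j → (i : ℕ) + 1 ∈ prefixSums L) ↔
      IsBlockMonotone (σ ∘ blockEquiv L) := by
  simp only [IsBlockMonotone, Function.comp_apply, Fin.monotone_iff_le_of_val_eq_succ]
  constructor
  · intro h j t t' htt'
    by_contra hle
    have hmem := h _ _ (by rw [blockEquiv_val, blockEquiv_val, htt', add_assoc]) hle
    rw [blockEquiv_add_one_mem_prefixSums_iff] at hmem
    omega
  · intro h i i' hii' hle
    by_contra hmem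
    obtain ⟨⟨j, t⟩, rfl⟩ := (blockEquiv L).surjective i
    rw [blockEquiv_add_one_mem_prefixSums_iff] at hmem
    have ht : (t : ℕ) + 1 < L.get j := by omega
    obtain rfl : i' = blockEquiv L ⟨j, ⟨t + 1, ht⟩⟩ := by
      ext
      rw [hii', blockEquiv_val, blockEquiv_val, add_assoc]
    exact hle (h j t _ rfl)

theorem listings_eq_ordered_chain_partitions_general {α : Type*} [PartialOrder α]
    (n : ℕ)
    (L : List ℕ) (hsum : L.sum = n) :
    Nat.card {σ : Fin n ≃ α // ∀ i j : Fin n, (j : ℕ) = (i : ℕ) + 1 →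
        ¬ σ i ≤ σ j → ((i : ℕ) + 1) ∈ prefixSums L} =
    Nat.card {f : Fin L.length → Finset α //
        (∀ j, (f j).card = L.get j) ∧
        (∀ j, ∀ a ∈ f j, ∀ b ∈ f j, a ≤ b ∨ b ≤ a) ∧
        (∀ j₁ j₂, j₁ ≠ j₂ → Disjoint (f j₁) (f j₂)) ∧
        (∀ a : α, ∃ j, a ∈ f j)} := by
  subst hsum
  exact (Nat.card_congr (Equiv.subtypeEquiv ((blockEquiv L).symm.equivCongr (Equiv.refl α))
    (nonAscents_mem_prefixSums_iff_isBlockMonotone L))).trans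
    card_isBlockMonotone_eq_card_isOrderedChainPartition

/-- for a finite poset `α` with `n` elements and a composition
`L = (α₁,…,α_k)` of `n`, the number of listings whose non-ascent set is contained
in `{α₁, α₁+α₂, …, α₁+⋯+α_{k-1}}` equals the number of ordered set partitions
`(P₁,…,P_k)` of `α` where each `P_i` is a chain with `α_i` elements. -/
theorem listings_eq_ordered_chain_partitions {α : Type*} [Fintype α] [PartialOrder α]
    (n : ℕ) (hn : n = Fintype.card α)
    (L : List ℕ) (hpos : ∀ x ∈ L, 0 < x) (hsum : L.sum = n) :
    Nat.card {σ : Fin n ≃ α // ∀ i j : Fin n, (j : ℕ) = (i : ℕ) + 1 →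
        ¬ σ i ≤ σ j → ((i : ℕ) + 1) ∈ prefixSums L} =
    Nat.card {f : Fin L.length → Finset α //
        (∀ j, (f j).card = L.get j) ∧
        (∀ j, ∀ a ∈ f j, ∀ b ∈ f j, a ≤ b ∨ b ≤ a) ∧
        (∀ j₁ j₂, j₁ ≠ j₂ → Disjoint (f j₁) (f j₂)) ∧
        (∀ a : α, ∃ j, a ∈ f j)} :=
  listings_eq_ordered_chain_partitions_general n L hsum
end

section
/- Let P be a finite poset on n elements whose incomparability graph is connected. Then the complementary digraph of D_P has at least one Hamiltonian cycle (for n ≥ 2). -/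
/-!
Call a finite set of a poset *series-indecomposable* if it is not an ordinal sum `D ⊕ U` (every
element of `D` below every element of `U`) with `D`, `U` nonempty; a connected incomparability
graph makes the whole poset indecomposable, since no incomparable pair crosses such a split.

The heart is a strong induction on `t`: if nothing in `t` lies above `x` and `insert x t` is
indecomposable, then `t` can be listed without ascents so that the last element is not below `x`.
Split off a minimal nonempty upper summand `U` of `t`; it is indecomposable, it contains some `a`
with `¬ a < x` (otherwise `{x}` would be an upper summand of `insert x t`), and
`insert x (t \ U)` is again indecomposable. List `U` ending at `a`, by rotating the cycle formed
by a maximal `z ∈ U` followed by the listing of `U \ {z}` given by induction, then list `t \ U`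
by induction; the step from `U` down into `t \ U` is no ascent. Finally, a maximal element
followed by such a listing of the rest is an ascent-free Hamiltonian cycle.
-/

/-- The incomparability graph of a poset. -/
def incGraph (α : Type*) [PartialOrder α] : SimpleGraph α where
  Adj a b := a ≠ b ∧ ¬ a ≤ b ∧ ¬ b ≤ a
  symm := by constructor; intro a b h; exact ⟨h.1.symm, h.2.2, h.2.1⟩
  loopless := by constructor; intro a h; exact h.1 rfl

namespace Cycle

variable {α : Type*} {r : α → α → Prop}

theorem chain_coe_iff_getElem {l : List α} :
    Chain r (l : Cycle α) ↔
      ∀ i (hi : i < l.length), r l[i] (l[(i + 1) % l.length]'(Nat.mod_lt _ (by omega))) := by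
  rcases l with _ | ⟨a, m⟩
  · simp
  · rw [chain_coe_cons, ← List.cons_append, List.isChain_cons_append_singleton_iff_forall₂,
      ← List.rotate_zero (m ++ [a]), ← List.rotate_cons_succ, List.forall₂_iff_get]
    simp only [List.length_rotate, List.get_eq_getElem, List.getElem_rotate]
    simp

theorem Chain.exists_isRotated_getLast? {l : List α} {a : α}
    (h : Chain r (l : Cycle α)) (ha : a ∈ l) :
    ∃ l', l' ~r l ∧ l'.IsChain r ∧ l'.getLast? = some a := by
  obtain ⟨l₁, l₂, rfl⟩ := List.append_of_mem ha
  have hrot : a :: (l₂ ++ l₁) ~r l₁ ++ a :: l₂ := by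
    simpa using (List.isRotated_append (l := l₁) (l' := a :: l₂)).symm
  rw [← coe_eq_coe.2 hrot, chain_coe_cons] at h
  exact ⟨l₂ ++ l₁ ++ [a], List.IsRotated.cons_append_singleton.symm.trans hrot, h.tail,
    List.getLast?_concat⟩

theorem chain_coe_cons_of_isChain {z : α} {l : List α}
    (hz : r z z) (hl : l.IsChain r) (hhead : ∀ v ∈ l.head?, r z v)
    (hlast : ∀ u ∈ l.getLast?, r u z) :
    Chain r ((z :: l : List α) : Cycle α) := by
  rw [chain_coe_cons, List.isChain_cons, List.isChain_append]
  refine ⟨?_, hl, List.isChain_singleton z, by simpa using hlast⟩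
  cases l <;> simp_all

end Cycle

namespace Finset

variable {α : Type*} [PartialOrder α]

def IsUpperSummand (s U : Finset α) : Prop :=
  U ⊆ s ∧ ∀ d ∈ s, d ∉ U → ∀ u ∈ U, d < u

def IsSeriesIndecomposable (s : Finset α) : Prop :=
  ∀ U, s.IsUpperSummand U → U.Nonempty → U = s

theorem IsUpperSummand.trans {s U V : Finset α} (hU : s.IsUpperSummand U)
    (hV : U.IsUpperSummand V) : s.IsUpperSummand V := by
  refine ⟨hV.1.trans hU.1, fun d hd hdV v hv => ?_⟩
  by_cases hdU : d ∈ U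
  · exact hV.2 d hdU hdV v hv
  · exact hU.2 d hd hdU v (hV.1 hv)

theorem isSeriesIndecomposable_univ_of_connected [Fintype α] (h : (incGraph α).Connected) :
    (univ : Finset α).IsSeriesIndecomposable := by
  intro U hU ⟨u, hu⟩
  refine eq_univ_of_forall fun d => by_contra fun hd => ?_
  obtain ⟨⟨⟨p, q⟩, hpq⟩, -, hp, hq⟩ :=
    (h.preconnected u d).some.exists_boundary_dart (U : Set α) hu hd
  exact hpq.2.2 (hU.2 q (mem_univ q) hq p hp).le

theorem exists_isUpperSummand_isSeriesIndecomposable {t : Finset α} (ht : t.Nonempty) :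
    ∃ U, t.IsUpperSummand U ∧ U.Nonempty ∧ U.IsSeriesIndecomposable := by
  obtain ⟨U, ⟨hU, hUne⟩, hmin⟩ := wellFounded_lt.has_min {U | t.IsUpperSummand U ∧ U.Nonempty}
    ⟨t, ⟨subset_rfl, fun d hd hdt => absurd hd hdt⟩, ht⟩
  refine ⟨U, hU, hUne, fun V hV hVne => ?_⟩
  by_contra hVU
  exact hmin V ⟨hU.trans hV, hVne⟩ (ssubset_of_subset_of_ne hV.1 hVU)

variable [DecidableEq α]

theorem IsSeriesIndecomposable.exists_not_lt_of_isUpperSummand {t U : Finset α} {x : α}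
    (hx : x ∉ t) (h : (insert x t).IsSeriesIndecomposable) (hU : t.IsUpperSummand U)
    (hUne : U.Nonempty) :
    ∃ a ∈ U, ¬ a < x := by
  by_contra! hlt
  obtain ⟨u, hu⟩ := hUne
  have hx_top : (insert x t).IsUpperSummand {x} := by
    refine ⟨by simp, fun d hd hdx v hv => ?_⟩
    rw [mem_singleton] at hdx hv
    subst hv
    have hdt : d ∈ t := mem_of_mem_insert_of_ne hd hdx
    by_cases hdU : d ∈ U
    · exact hlt d hdU
    · exact (hU.2 d hdt hdU u hu).trans (hlt u hu)
  have hux : u ∈ ({x} : Finset α) :=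
    h {x} hx_top (singleton_nonempty x) ▸ mem_insert_of_mem (hU.1 hu)
  exact hx (mem_singleton.1 hux ▸ hU.1 hu)

theorem IsSeriesIndecomposable.insert_sdiff {t U : Finset α} {x : α}
    (hxt : ∀ z ∈ t, ¬ x < z) (h : (insert x t).IsSeriesIndecomposable)
    (hU : t.IsUpperSummand U) : (insert x (t \ U)).IsSeriesIndecomposable := by
  intro V hV ⟨v, hv⟩
  by_cases hxV : x ∈ V
  · have hVU : (insert x t).IsUpperSummand (V ∪ U) := by
      refine ⟨union_subset (hV.1.trans (insert_subset_insert x sdiff_subset))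
        (hU.1.trans (subset_insert x t)), fun d hd hdVU w hw => ?_⟩
      rw [mem_union, not_or] at hdVU
      have hdt : d ∈ t := mem_of_mem_insert_of_ne hd (ne_of_mem_of_not_mem hxV hdVU.1).symm
      rcases mem_union.1 hw with hw | hw
      · exact hV.2 d (mem_insert_of_mem (mem_sdiff.2 ⟨hdt, hdVU.2⟩)) hdVU.1 w hw
      · exact hU.2 d hdt hdVU.2 w hw
    have hall := h _ hVU ⟨x, mem_union_left U hxV⟩
    refine hV.1.antisymm fun d hd => by_contra fun hdV => ?_
    rcases mem_insert.1 hd with rfl | hd'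
    · exact hdV hxV
    · have hdVU : d ∈ V ∪ U := hall ▸ insert_subset_insert x sdiff_subset hd
      exact (mem_sdiff.1 hd').2 ((mem_union.1 hdVU).resolve_left hdV)
  · have hvt : v ∈ t :=
      (mem_sdiff.1 (mem_of_mem_insert_of_ne (hV.1 hv) (ne_of_mem_of_not_mem hv hxV))).1
    exact (hxt v hvt (hV.2 x (mem_insert_self _ _) hxV v hv)).elim

def IsAscentFreePath (s : Finset α) (l : List α) : Prop :=
  l.Nodup ∧ l.toFinset = s ∧ l.IsChain (¬ · < ·)

def IsAscentFreeCycle (s : Finset α) (l : List α) : Prop :=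
  l.Nodup ∧ l.toFinset = s ∧ Cycle.Chain (¬ · < ·) (l : Cycle α)

theorem IsAscentFreePath.cons {s : Finset α} {z : α} {l : List α} (hz : Maximal (· ∈ s) z)
    (hl : (s.erase z).IsAscentFreePath l)
    (hlast : ∀ u ∈ l.getLast?, ¬ u < z) : s.IsAscentFreeCycle (z :: l) := by
  obtain ⟨hnd, hls, hch⟩ := hl
  refine ⟨List.nodup_cons.2 ⟨fun hzl => ?_, hnd⟩,
    by rw [List.toFinset_cons, hls, insert_erase hz.1],
    Cycle.chain_coe_cons_of_isChain (lt_irrefl z) hch (fun v hv => hz.not_gt ?_) hlast⟩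
  · exact notMem_erase z s (hls ▸ List.mem_toFinset.2 hzl)
  · exact mem_of_mem_erase (hls ▸ List.mem_toFinset.2 (List.mem_of_mem_head? hv))

theorem IsAscentFreeCycle.exists_path_getLast? {s : Finset α} {l : List α} {a : α}
    (hl : s.IsAscentFreeCycle l) (ha : a ∈ s) :
    ∃ l', s.IsAscentFreePath l' ∧ l'.getLast? = some a := by
  obtain ⟨hnd, hls, hch⟩ := hl
  obtain ⟨l', hrot, hch', hlast⟩ :=
    hch.exists_isRotated_getLast? (List.mem_toFinset.1 (hls ▸ ha))
  exact ⟨l', ⟨hrot.perm.nodup_iff.2 hnd, hls ▸ List.toFinset_eq_of_perm _ _ hrot.perm, hch'⟩, hlast⟩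

theorem IsAscentFreePath.append {U D : Finset α} {l₁ l₂ : List α} (h₁ : U.IsAscentFreePath l₁)
    (h₂ : D.IsAscentFreePath l₂) (hDU : ∀ d ∈ D, ∀ u ∈ U, d < u) :
    (U ∪ D).IsAscentFreePath (l₁ ++ l₂) := by
  obtain ⟨hnd₁, hl₁, hch₁⟩ := h₁
  obtain ⟨hnd₂, hl₂, hch₂⟩ := h₂
  have mem₁ : ∀ {u}, u ∈ l₁ → u ∈ U := fun hu => hl₁ ▸ List.mem_toFinset.2 hu
  have mem₂ : ∀ {d}, d ∈ l₂ → d ∈ D := fun hd => hl₂ ▸ List.mem_toFinset.2 hd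
  refine ⟨hnd₁.append hnd₂ fun u hu₁ hu₂ => lt_irrefl u (hDU u (mem₂ hu₂) u (mem₁ hu₁)),
    by rw [List.toFinset_append, hl₁, hl₂], List.isChain_append.2 ⟨hch₁, hch₂, fun u hu d hd => ?_⟩⟩
  exact (hDU d (mem₂ (List.mem_of_mem_head? hd)) u (mem₁ (List.mem_of_mem_getLast? hu))).asymm

theorem exists_isAscentFreePath_getLast?_not_lt (t : Finset α) {x : α} (hx : x ∉ t)
    (hxt : ∀ z ∈ t, ¬ x < z) (h : (insert x t).IsSeriesIndecomposable) :
    ∃ l, t.IsAscentFreePath l ∧ ∀ u ∈ l.getLast?, ¬ u < x := by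
  induction t using Finset.strongInduction generalizing x with
  | H t ih =>
    rcases t.eq_empty_or_nonempty with rfl | ht
    · exact ⟨[], ⟨List.nodup_nil, rfl, List.isChain_nil⟩, by simp⟩
    obtain ⟨U, hU, hUne, hUind⟩ := exists_isUpperSummand_isSeriesIndecomposable ht
    obtain ⟨a, haU, hax⟩ := h.exists_not_lt_of_isUpperSummand hx hU hUne
    obtain ⟨l₁, hl₁, hlast₁⟩ : ∃ l₁, U.IsAscentFreePath l₁ ∧ l₁.getLast? = some a := by
      obtain ⟨z, hz⟩ := U.exists_maximal hUne
      obtain ⟨l, hl, hlast⟩ := ih (U.erase z) ((erase_ssubset hz.1).trans_subset hU.1)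
        (notMem_erase z U) (fun w hw => hz.not_gt (mem_of_mem_erase hw))
        (by rwa [insert_erase hz.1])
      exact (hl.cons hz hlast).exists_path_getLast? haU
    obtain ⟨l₂, hl₂, hlast₂⟩ := ih (t \ U) (sdiff_ssubset hU.1 hUne)
      (fun hxU => hx (mem_sdiff.1 hxU).1) (fun z hz => hxt z (mem_sdiff.1 hz).1)
      (h.insert_sdiff hxt hU)
    refine ⟨l₁ ++ l₂, union_sdiff_of_subset hU.1 ▸ hl₁.append hl₂
      fun d hd => hU.2 d (mem_sdiff.1 hd).1 (mem_sdiff.1 hd).2, fun u hu => ?_⟩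
    rw [List.getLast?_append, hlast₁] at hu
    cases hl : l₂.getLast? with
    | none => simp only [hl, Option.none_or, Option.mem_some_iff] at hu; exact hu ▸ hax
    | some w => exact hlast₂ u (by simpa only [hl, Option.some_or] using hu)

theorem exists_isAscentFreeCycle {s : Finset α} (hs : s.Nonempty)
    (h : s.IsSeriesIndecomposable) : ∃ l, s.IsAscentFreeCycle l := by
  obtain ⟨z, hz⟩ := s.exists_maximal hs
  obtain ⟨l, hl, hlast⟩ := exists_isAscentFreePath_getLast?_not_lt (s.erase z)
    (notMem_erase z s) (fun w hw => hz.not_gt (mem_of_mem_erase hw)) (by rwa [insert_erase hz.1])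
  exact ⟨z :: l, hl.cons hz hlast⟩

end Finset

/-- if the incomparability graph of a finite poset with `n ≥ 2`
elements is connected, then the complementary digraph of `D_P` (edges `(a,b)`
with `¬ a < b`) has a Hamiltonian cycle. -/
theorem inc_connected_hamiltonian_cycle {α : Type*} [Fintype α] [PartialOrder α]
    (n : ℕ) (hn : n = Fintype.card α) (hn2 : 2 ≤ n)
    (hconn : (incGraph α).Connected) :
    ∃ v : Fin n ≃ α, ∀ i : Fin n,
      ¬ v i < v ⟨((i : ℕ) + 1) % n, Nat.mod_lt _ (by omega)⟩ := by
  classical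
  have hne : (Finset.univ : Finset α).Nonempty :=
    Finset.card_pos.1 (by rw [Finset.card_univ]; omega)
  obtain ⟨l, hnd, hcover, hcycle⟩ :=
    Finset.exists_isAscentFreeCycle hne (Finset.isSeriesIndecomposable_univ_of_connected hconn)
  obtain rfl : l.length = n := by
    rw [← List.toFinset_card_of_nodup hnd, hcover, Finset.card_univ, hn]
  exact ⟨hnd.getEquivOfForallMemList _ fun a => List.mem_toFinset.1 (hcover ▸ Finset.mem_univ a),
    fun i => Cycle.chain_coe_iff_getElem.1 hcycle i i.2⟩
end
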